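/- Let W be symmetric positive semidefinite with ‖W‖₂ ≤ 1, and F symmetric with σ(F) ⊆ (−1,1]. If x is a nonzero vector such that F·V x = x, where V = 2W − I, then x ∈ ker(I−W) and Fx = x; i.e., the fixed points of J = FV are exactly ker(I−W) ∩ ker(I−F). -/

import Mathlib

open Matrix Filter

/-- Euclidean norm of a vector in ℝ^n. -/
noncomputable def vNorm {n : ℕ} (x : Fin n → ℝ) : ℝ := Real.sqrt (∑ i, x i ^ 2)

/-- Operator 2-norm of a matrix (sup of ‖Mx‖₂ over the unit sphere). -/
noncomputable def mNorm {m n : ℕ} (M : Matrix (Fin m) (Fin n) ℝ) : ℝ :=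
  sSup ((fun x => vNorm (M.mulVec x)) '' {x | vNorm x = 1})

/-- Spectral radius of a square real matrix. -/
noncomputable def sRad {n : ℕ} (M : Matrix (Fin n) (Fin n) ℝ) : ℝ :=
  sSup ((fun μ => |μ|) '' spectrum ℝ M)

namespace S18

variable {n : ℕ}

noncomputable def toE (x : Fin n → ℝ) : EuclideanSpace ℝ (Fin n) := (WithLp.equiv 2 _).symm x

lemma vNorm_eq (x : Fin n → ℝ) : vNorm x = ‖toE x‖ := by
  rw [EuclideanSpace.norm_eq]
  simp [vNorm, toE, sq_abs]

lemma norm_sq_repr (B : OrthonormalBasis (Fin n) ℝ (EuclideanSpace ℝ (Fin n)))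
    (x : EuclideanSpace ℝ (Fin n)) : ‖x‖ ^ 2 = ∑ i, (B.repr x i) ^ 2 := by
  rw [← B.repr.norm_map x, EuclideanSpace.norm_eq, Real.sq_sqrt (by positivity)]
  simp [sq_abs]

lemma key_le (B : OrthonormalBasis (Fin n) ℝ (EuclideanSpace ℝ (Fin n))) (ν : Fin n → ℝ)
    (x y : EuclideanSpace ℝ (Fin n))
    (hrepr : ∀ i, B.repr y i = ν i * B.repr x i) (hb : ∀ i, |ν i| ≤ 1) : ‖y‖ ≤ ‖x‖ := by
  have h2 : ‖y‖ ^ 2 ≤ ‖x‖ ^ 2 := by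
    rw [norm_sq_repr B, norm_sq_repr B x]
    refine Finset.sum_le_sum fun i _ => ?_
    rw [hrepr i, mul_pow]
    have h1 : (ν i) ^ 2 ≤ 1 := by
      have := hb i; have := abs_nonneg (ν i); nlinarith [sq_abs (ν i)]
    nlinarith [sq_nonneg (B.repr x i)]
  exact le_of_pow_le_pow_left₀ two_ne_zero (norm_nonneg _) h2

lemma key_eq (B : OrthonormalBasis (Fin n) ℝ (EuclideanSpace ℝ (Fin n))) (ν : Fin n → ℝ)
    (x y : EuclideanSpace ℝ (Fin n))
    (hrepr : ∀ i, B.repr y i = ν i * B.repr x i) (hb : ∀ i, ν i ∈ Set.Ioc (-1 : ℝ) 1)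
    (h : ‖y‖ = ‖x‖) : y = x := by
  have hsum : ∑ i, (1 - (ν i) ^ 2) * (B.repr x i) ^ 2 = 0 := by
    have h2 : ‖y‖ ^ 2 = ‖x‖ ^ 2 := by rw [h]
    rw [norm_sq_repr B, norm_sq_repr B x] at h2
    have h3 : ∑ i, (ν i * B.repr x i) ^ 2 = ∑ i, (B.repr x i) ^ 2 := by
      rw [← h2]; exact Finset.sum_congr rfl fun i _ => by rw [hrepr i]
    have : ∑ i, (1 - (ν i) ^ 2) * (B.repr x i) ^ 2
        = ∑ i, ((B.repr x i) ^ 2 - (ν i * B.repr x i) ^ 2) := by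
      refine Finset.sum_congr rfl fun i _ => by ring
    rw [this, Finset.sum_sub_distrib, h3, sub_self]
  have hterm : ∀ i ∈ Finset.univ, (1 - (ν i) ^ 2) * (B.repr x i) ^ 2 = 0 := by
    rw [← Finset.sum_eq_zero_iff_of_nonneg]
    · exact hsum
    · intro i _
      have h1 := (hb i).1; have h2 := (hb i).2
      have : (ν i) ^ 2 ≤ 1 := by nlinarith
      nlinarith [sq_nonneg (B.repr x i)]
  apply B.repr.injective
  ext i
  rw [hrepr i]
  have := hterm i (Finset.mem_univ i)
  rcases mul_eq_zero.mp this with hν | hc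
  · have h1 := (hb i).1; have h2 := (hb i).2
    have : ν i = 1 := by nlinarith
    rw [this, one_mul]
  · have : B.repr x i = 0 := by
      have := sq_nonneg (B.repr x i); nlinarith
    rw [this, mul_zero]

lemma repr_mulVec {A : Matrix (Fin n) (Fin n) ℝ} (hA : A.IsHermitian) (x : Fin n → ℝ)
    (i : Fin n) :
    hA.eigenvectorBasis.repr (toE (A.mulVec x)) i
      = hA.eigenvalues i * hA.eigenvectorBasis.repr (toE x) i := by
  rw [OrthonormalBasis.repr_apply_apply, OrthonormalBasis.repr_apply_apply]
  rw [EuclideanSpace.inner_eq_star_dotProduct, EuclideanSpace.inner_eq_star_dotProduct]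
  have hstar : ∀ v : Fin n → ℝ, star v = v := fun v => rfl
  simp only [toE, WithLp.equiv_symm_apply, WithLp.ofLp_toLp]
  rw [dotProduct_comm, dotProduct_comm x]
  have hAt : Aᵀ = A := by
    have := hA.eq
    rwa [conjTranspose_eq_transpose_of_trivial] at this
  calc (star (WithLp.equiv 2 _ (hA.eigenvectorBasis i))) ⬝ᵥ (A *ᵥ x)
      = (⇑(hA.eigenvectorBasis i) : Fin n → ℝ) ⬝ᵥ (A *ᵥ x) := rfl
    _ = (⇑(hA.eigenvectorBasis i) ᵥ* A) ⬝ᵥ x := dotProduct_mulVec _ _ _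
    _ = (Aᵀ *ᵥ ⇑(hA.eigenvectorBasis i)) ⬝ᵥ x := by rw [mulVec_transpose]
    _ = (A *ᵥ ⇑(hA.eigenvectorBasis i)) ⬝ᵥ x := by rw [hAt]
    _ = (hA.eigenvalues i • ⇑(hA.eigenvectorBasis i)) ⬝ᵥ x := by
        rw [hA.mulVec_eigenvectorBasis]
    _ = hA.eigenvalues i * ((⇑(hA.eigenvectorBasis i) : Fin n → ℝ) ⬝ᵥ x) := smul_dotProduct _ _ _
    _ = hA.eigenvalues i * (star (WithLp.equiv 2 _ (hA.eigenvectorBasis i))) ⬝ᵥ x := rfl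

lemma mNorm_bddAbove (M : Matrix (Fin n) (Fin n) ℝ) :
    BddAbove ((fun x => vNorm (M.mulVec x)) '' {x | vNorm x = 1}) := by
  have hvcont : Continuous fun x : Fin n → ℝ => vNorm x := by
    unfold vNorm
    exact Real.continuous_sqrt.comp (continuous_finset_sum _ fun i _ =>
      ((continuous_apply i).pow 2))
  have hclosed : IsClosed {x : Fin n → ℝ | vNorm x = 1} :=
    isClosed_singleton.preimage hvcont
  have hbdd : Bornology.IsBounded {x : Fin n → ℝ | vNorm x = 1} := by
    rw [Metric.isBounded_iff_subset_closedBall 0]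
    refine ⟨1, fun x hx => ?_⟩
    simp only [Set.mem_setOf_eq] at hx
    rw [Metric.mem_closedBall, dist_zero_right]
    have hsum : ∑ i, x i ^ 2 = 1 := by
      have := congrArg (· ^ 2) hx
      simpa [vNorm, Real.sq_sqrt (Finset.sum_nonneg fun i _ => sq_nonneg (x i))] using this
    rw [pi_norm_le_iff_of_nonneg zero_le_one]
    intro i
    rw [Real.norm_eq_abs, ← Real.sqrt_one, ← Real.sqrt_sq_eq_abs]
    apply Real.sqrt_le_sqrt
    rw [← hsum]
    exact Finset.single_le_sum (fun j _ => sq_nonneg (x j)) (Finset.mem_univ i)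
  have hcomp : IsCompact {x : Fin n → ℝ | vNorm x = 1} :=
    Metric.isCompact_of_isClosed_isBounded hclosed hbdd
  have hfc : Continuous fun x : Fin n → ℝ => vNorm (M.mulVec x) :=
    hvcont.comp M.mulVecLin.continuous_of_finiteDimensional
  exact (hcomp.image hfc).bddAbove

/-- Eigenvalues of W are ≤ 1 given mNorm W ≤ 1. -/
lemma eig_le_one {W : Matrix (Fin n) (Fin n) ℝ} (hW : W.IsHermitian) (hn : mNorm W ≤ 1)
    (i : Fin n) : |hW.eigenvalues i| ≤ 1 := by
  set v : EuclideanSpace ℝ (Fin n) := hW.eigenvectorBasis i with hv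
  have hnv : ‖v‖ = 1 := hW.eigenvectorBasis.orthonormal.1 i
  have hmem : vNorm (W.mulVec ⇑v) ∈ (fun x => vNorm (W.mulVec x)) '' {x | vNorm x = 1} := by
    refine ⟨⇑v, ?_, rfl⟩
    simp only [Set.mem_setOf_eq]
    rw [vNorm_eq]
    exact hnv
  have hle : vNorm (W.mulVec ⇑v) ≤ mNorm W := le_csSup (mNorm_bddAbove W) hmem
  have heq : vNorm (W.mulVec ⇑v) = |hW.eigenvalues i| := by
    rw [hW.mulVec_eigenvectorBasis, vNorm_eq]
    have : toE (hW.eigenvalues i • ⇑v) = hW.eigenvalues i • v := rfl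
    rw [this, norm_smul, hnv, mul_one, Real.norm_eq_abs]
  rw [heq] at hle
  exact hle.trans hn

end S18

open S18 in
/-- For symmetric PSD `W` with `‖W‖₂ ≤ 1` and symmetric `F` with
`σ(F) ⊆ (−1,1]`, any nonzero fixed point `x` of `J = F(2W − I)` satisfies
`x ∈ ker(I−W)` and `Fx = x`; i.e. the fixed points of `J` are exactly
`ker(I−W) ∩ ker(I−F)`. -/
theorem statement18 {n : ℕ} (W F : Matrix (Fin n) (Fin n) ℝ)
    (hWpsd : W.PosSemidef) (hWnorm : mNorm W ≤ 1)
    (hFsym : Fᵀ = F) (hFspec : ∀ μ ∈ spectrum ℝ F, μ ∈ Set.Ioc (-1 : ℝ) 1) :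
    (∀ x : Fin n → ℝ, x ≠ 0 → (F * ((2 : ℝ) • W - 1)).mulVec x = x →
      x ∈ LinearMap.ker (Matrix.mulVecLin (1 - W)) ∧ F.mulVec x = x) ∧
    (∀ x : Fin n → ℝ, (F * ((2 : ℝ) • W - 1)).mulVec x = x ↔
      x ∈ LinearMap.ker (Matrix.mulVecLin (1 - W)) ⊓
          LinearMap.ker (Matrix.mulVecLin (1 - F))) := by
  have hWh : W.IsHermitian := hWpsd.1
  have hFh : F.IsHermitian := by
    rw [Matrix.IsHermitian, conjTranspose_eq_transpose_of_trivial]; exact hFsym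
  -- eigenvalue facts
  have hWeig : ∀ i, |2 * hWh.eigenvalues i - 1| ≤ 1 := by
    intro i
    have h1 := eig_le_one hWh hWnorm i
    have h0 := hWpsd.eigenvalues_nonneg i
    rw [abs_le] at h1 ⊢
    constructor <;> nlinarith [h1.2]
  have hFeig : ∀ i, hFh.eigenvalues i ∈ Set.Ioc (-1 : ℝ) 1 := fun i =>
    hFspec _ (hFh.eigenvalues_mem_spectrum_real i)
  -- V := 2W - 1
  set V : Matrix (Fin n) (Fin n) ℝ := (2 : ℝ) • W - 1 with hV
  have hVmul : ∀ x : Fin n → ℝ, V.mulVec x = (2 : ℝ) • W.mulVec x - x := by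
    intro x
    rw [hV, sub_mulVec, smul_mulVec, one_mulVec]
  -- repr of V in W's eigenbasis
  have hVrepr : ∀ (x : Fin n → ℝ) (i : Fin n),
      hWh.eigenvectorBasis.repr (toE (V.mulVec x)) i
        = (2 * hWh.eigenvalues i - 1) * hWh.eigenvectorBasis.repr (toE x) i := by
    intro x i
    have h1 : toE (V.mulVec x) = (2 : ℝ) • toE (W.mulVec x) - toE x := by
      rw [hVmul]; rfl
    rw [h1, map_sub, _root_.map_smul]
    simp only [PiLp.sub_apply, PiLp.smul_apply, smul_eq_mul]
    rw [repr_mulVec hWh]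
    ring
  -- contraction facts
  have hVle : ∀ x : Fin n → ℝ, ‖toE (V.mulVec x)‖ ≤ ‖toE x‖ := fun x =>
    key_le hWh.eigenvectorBasis _ (toE x) (toE (V.mulVec x)) (hVrepr x) hWeig
  have hFle : ∀ y : Fin n → ℝ, ‖toE (F.mulVec y)‖ ≤ ‖toE y‖ := fun y =>
    key_le hFh.eigenvectorBasis _ (toE y) (toE (F.mulVec y)) (repr_mulVec hFh y)
      (fun i => by have := hFeig i; rw [abs_le]; exact ⟨le_of_lt this.1, this.2⟩)
  -- the main fixed point argument (works for all x, including 0)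
  have main : ∀ x : Fin n → ℝ, (F * V).mulVec x = x → W.mulVec x = x ∧ F.mulVec x = x := by
    intro x hx
    rw [← Matrix.mulVec_mulVec] at hx
    -- norms
    have h2 : ‖toE (F.mulVec (V.mulVec x))‖ = ‖toE (V.mulVec x)‖ :=
      le_antisymm (hFle _) (by rw [hx]; exact hVle x)
    have hFfix : toE (F.mulVec (V.mulVec x)) = toE (V.mulVec x) :=
      key_eq hFh.eigenvectorBasis hFh.eigenvalues (toE (V.mulVec x))
        (toE (F.mulVec (V.mulVec x))) (repr_mulVec hFh (V.mulVec x)) hFeig h2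
    have h5 : F.mulVec (V.mulVec x) = V.mulVec x := by
      have h3 := congrArg (WithLp.equiv 2 (Fin n → ℝ)) hFfix
      simpa [toE] using h3
    have hVx : V.mulVec x = x := h5.symm.trans hx
    have hWx : W.mulVec x = x := by
      have h := hVmul x
      rw [hVx] at h
      have h4 : (2 : ℝ) • W.mulVec x = (2 : ℝ) • x := by
        linear_combination (norm := module) -h
      exact smul_right_injective (Fin n → ℝ) two_ne_zero h4
    refine ⟨hWx, ?_⟩
    conv_lhs => rw [← hVx]
    exact hx
  constructor
  · intro x _ hx
    obtain ⟨hWx, hFx⟩ := main x hx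
    refine ⟨?_, hFx⟩
    simp only [LinearMap.mem_ker, Matrix.mulVecLin_apply, sub_mulVec, one_mulVec, hWx, sub_self]
  · intro x
    constructor
    · intro hx
      obtain ⟨hWx, hFx⟩ := main x hx
      rw [Submodule.mem_inf]
      constructor <;>
        simp only [LinearMap.mem_ker, Matrix.mulVecLin_apply, sub_mulVec, one_mulVec, hWx, hFx,
          sub_self]
    · intro hmem
      rw [Submodule.mem_inf] at hmem
      have h1 : W.mulVec x = x := by
        have h := hmem.1
        simp only [LinearMap.mem_ker, Matrix.mulVecLin_apply, sub_mulVec, one_mulVec,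
          sub_eq_zero] at h
        exact h.symm
      have h2 : F.mulVec x = x := by
        have h := hmem.2
        simp only [LinearMap.mem_ker, Matrix.mulVecLin_apply, sub_mulVec, one_mulVec,
          sub_eq_zero] at h
        exact h.symm
      rw [← Matrix.mulVec_mulVec, hVmul x, h1]
      have h3 : (2 : ℝ) • x - x = x := by module
      rw [h3, h2]
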